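/- arXiv:0709.1196 — 2 statements merged into one kernel-verified Lean document; each statement's English description precedes it below -/
import Mathlib

section
/- Let w, p, u, v ∈ ℂ and let V be the 4×4 complex matrix with rows (w, 0, p, 0), (0, w, 0, p), (0, 0, −w, −u), (0, 0, −p, −v). If (w + v)² ≠ 4(wv − up) and 2w² + 2wv − up ≠ 0, then V has exactly three distinct complex eigenvalues, namely w (with algebraic multiplicity two) and the two distinct roots of X² + (w + v)X + (wv − up). -/
/-!
`V` is block upper triangular with diagonal blocks `w • 1` and `!![-w, -u; -p, -v]`, so its
characteristic polynomial is `(X - w)² (X² + (w + v) X + (w v - u p))`. Over `ℂ` the quadratic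
factor has two distinct roots because its discriminant is nonzero, and neither of them is `w`
because the quadratic evaluated at `w` is `2 w² + 2 w v - u p`.
-/

open Polynomial

theorem exists_vieta_pair_of_sq_ne {K : Type*} [Field K] [IsAlgClosed K] [NeZero (2 : K)]
    {b c : K} (h : b ^ 2 ≠ 4 * c) : ∃ r₁ r₂ : K, r₁ ≠ r₂ ∧ r₁ + r₂ = -b ∧ r₁ * r₂ = c := by
  obtain ⟨s, hs⟩ := IsAlgClosed.exists_pow_nat_eq (b ^ 2 - 4 * c) two_pos
  have hs0 : s ≠ 0 := by
    rintro rfl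
    exact h (by linear_combination -hs)
  refine ⟨(-b + s) / 2, (-b - s) / 2, ?_, ?_, ?_⟩
  · rw [Ne, div_left_inj' two_ne_zero]
    intro heq
    exact hs0 (mul_left_cancel₀ (two_ne_zero (α := K)) (by linear_combination heq))
  · field_simp
    ring
  · field_simp
    linear_combination -hs

section Vieta

variable {R : Type*} [CommRing R] {b c r₁ r₂ : R}

theorem quadratic_eval_left_of_vieta (hsum : r₁ + r₂ = -b) (hprod : r₁ * r₂ = c) :
    r₁ ^ 2 + b * r₁ + c = 0 := by
  linear_combination r₁ * hsum - hprod

theorem quadratic_eq_mul_X_sub_C (hsum : r₁ + r₂ = -b) (hprod : r₁ * r₂ = c) :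
    (X ^ 2 + C b * X + C c : R[X]) = (X - C r₁) * (X - C r₂) := by
  rw [← hprod, ← neg_eq_iff_eq_neg.mpr hsum]
  simp only [map_neg, map_add, map_mul]
  ring

end Vieta

theorem charpoly_fin_four_block_triangular {R : Type*} [CommRing R] (w p u v : R) :
    (!![w, 0, p, 0; 0, w, 0, p; 0, 0, -w, -u; 0, 0, -p, -v] : Matrix (Fin 4) (Fin 4) R).charpoly
      = (X - C w) ^ 2 * (X ^ 2 + C (w + v) * X + C (w * v - u * p)) := by
  simp [Matrix.charpoly, Matrix.det_succ_row_zero, Fin.sum_univ_succ, Matrix.charmatrix_apply,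
    Matrix.diagonal, Fin.succAbove]
  ring

theorem roots_X_sub_C_sq_mul {R : Type*} [CommRing R] [IsDomain R] (a b c : R) :
    ((X - C a) ^ 2 * ((X - C b) * (X - C c))).roots = {a, a, b, c} := by
  convert roots_multiset_prod_X_sub_C ({a, a, b, c} : Multiset R) using 2
  simp only [Multiset.insert_eq_cons, Multiset.map_cons, Multiset.prod_cons,
    Multiset.map_singleton, Multiset.prod_singleton]
  ring

theorem card_toFinset_double_insert {α : Type*} [DecidableEq α] {a b c : α}
    (hab : a ≠ b) (hac : a ≠ c) (hbc : b ≠ c) :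
    ({a, a, b, c} : Multiset α).toFinset.card = 3 := by
  simp [Finset.card_insert_of_notMem, hab, hac, hbc]

theorem statement9 (w p u v : ℂ)
    (V : Matrix (Fin 4) (Fin 4) ℂ)
    (hV : V = !![w, 0, p, 0;
                 0, w, 0, p;
                 0, 0, -w, -u;
                 0, 0, -p, -v])
    (hdisc : (w + v) ^ 2 ≠ 4 * (w * v - u * p))
    (hw : 2 * w ^ 2 + 2 * w * v - u * p ≠ 0) :
    ∃ r₁ r₂ : ℂ, r₁ ≠ r₂ ∧ r₁ ≠ w ∧ r₂ ≠ w ∧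
      r₁ ^ 2 + (w + v) * r₁ + (w * v - u * p) = 0 ∧
      r₂ ^ 2 + (w + v) * r₂ + (w * v - u * p) = 0 ∧
      V.charpoly.roots = {w, w, r₁, r₂} ∧
      V.charpoly.roots.toFinset.card = 3 := by
  obtain ⟨r₁, r₂, hne, hsum, hprod⟩ := exists_vieta_pair_of_sq_ne hdisc
  have hq₁ := quadratic_eval_left_of_vieta hsum hprod
  have hq₂ := quadratic_eval_left_of_vieta ((add_comm r₂ r₁).trans hsum)
    ((mul_comm r₂ r₁).trans hprod)
  have hne_w : ∀ r : ℂ, r ^ 2 + (w + v) * r + (w * v - u * p) = 0 → r ≠ w := by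
    rintro r hr rfl
    exact hw (by linear_combination hr)
  have hroots : V.charpoly.roots = {w, w, r₁, r₂} := by
    rw [hV, charpoly_fin_four_block_triangular, quadratic_eq_mul_X_sub_C hsum hprod,
      roots_X_sub_C_sq_mul]
  refine ⟨r₁, r₂, hne, hne_w r₁ hq₁, hne_w r₂ hq₂, hq₁, hq₂, hroots, ?_⟩
  rw [hroots]
  exact card_toFinset_double_insert (hne_w r₁ hq₁).symm (hne_w r₂ hq₂).symm hne
end

section
/- Let 𝒜 be a normed ring, let a, b ∈ 𝒜 be constants, and let Ψ, U : ℝ² → 𝒜 be differentiable functions of (x, t) such that for all (x, t): a·Ψ = Ψ·b, Ψ·U = 0, and ∂_t Ψ + a·(∂_x Ψ) = 0. Then for every natural number m, Ψ·(bᵐ·U) = 0 for all (x, t), and moreover Ψ·( ∂_t U + b·(∂_x U) ) = 0 for all (x, t). -/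
/-! Since `Ψ b = a Ψ`, the factor `bᵐ` can be moved through `Ψ` as `aᵐ`, where it meets `Ψ U = 0`.
Differentiating `Ψ U = 0` gives `Ψ ∂U = -(∂Ψ) U`, so `Ψ (∂_t U + b ∂_x U) = -(∂_t Ψ + a ∂_x Ψ) U`,
which vanishes by the evolution equation for `Ψ`. -/

/-- `∂_x` of an 𝒜-valued function on ℝ², variables `(x, t)`. -/
noncomputable def pdx {𝒜 : Type*} [NormedRing 𝒜] [NormedAlgebra ℝ 𝒜]
    (f : ℝ × ℝ → 𝒜) (z : ℝ × ℝ) : 𝒜 := fderiv ℝ f z (1, 0)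

/-- `∂_t` of an 𝒜-valued function on ℝ², variables `(x, t)`. -/
noncomputable def pdt {𝒜 : Type*} [NormedRing 𝒜] [NormedAlgebra ℝ 𝒜]
    (f : ℝ × ℝ → 𝒜) (z : ℝ × ℝ) : 𝒜 := fderiv ℝ f z (0, 1)

theorem mul_pow_mul_eq_zero_of_mul_eq_pow_mul {M : Type*} [MonoidWithZero M] {a b p u : M}
    (hab : a * p = p * b) (hpu : p * u = 0) (m : ℕ) : p * (b ^ m * u) = 0 := by
  have hpow : p * b ^ m = a ^ m * p := (SemiconjBy.pow_right hab.symm m :)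
  rw [← mul_assoc, hpow, mul_assoc, hpu, mul_zero]

theorem mul_fderiv_apply_eq_neg_of_mul_eq_zero {𝕜 E 𝔸 : Type*} [NontriviallyNormedField 𝕜]
    [NormedAddCommGroup E] [NormedSpace 𝕜 E] [NormedRing 𝔸] [NormedAlgebra 𝕜 𝔸]
    {f g : E → 𝔸} {z : E} (hf : DifferentiableAt 𝕜 f z) (hg : DifferentiableAt 𝕜 g z)
    (hfg : ∀ w, f w * g w = 0) (v : E) :
    f z * fderiv 𝕜 g z v = -(fderiv 𝕜 f z v * g z) := by
  have hzero : f * g = 0 := funext hfg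
  have hprod := congrArg (fun L : E →L[𝕜] 𝔸 => L v) (fderiv_mul' hf hg)
  simp only [hzero, fderiv_zero, add_apply, smul_apply, smul_eq_mul,
    MulOpposite.smul_eq_mul_unop, MulOpposite.unop_op] at hprod
  exact eq_neg_of_add_eq_zero_left hprod.symm

theorem statement12 {𝒜 : Type*} [NormedRing 𝒜] [NormedAlgebra ℝ 𝒜]
    (a b : 𝒜) (Ψ U : ℝ × ℝ → 𝒜)
    (hΨ : Differentiable ℝ Ψ) (hU : Differentiable ℝ U)
    (hint : ∀ z, a * Ψ z = Ψ z * b)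
    (hhom : ∀ z, Ψ z * U z = 0)
    (hevol : ∀ z, pdt Ψ z + a * pdx Ψ z = 0) :
    (∀ m : ℕ, ∀ z, Ψ z * (b ^ m * U z) = 0) ∧
    (∀ z, Ψ z * (pdt U z + b * pdx U z) = 0) := by
  refine ⟨fun m z => mul_pow_mul_eq_zero_of_mul_eq_pow_mul (hint z) (hhom z) m, fun z => ?_⟩
  have hx : Ψ z * pdx U z = -(pdx Ψ z * U z) :=
    mul_fderiv_apply_eq_neg_of_mul_eq_zero (hΨ z) (hU z) hhom (1, 0)
  have ht : Ψ z * pdt U z = -(pdt Ψ z * U z) :=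
    mul_fderiv_apply_eq_neg_of_mul_eq_zero (hΨ z) (hU z) hhom (0, 1)
  calc Ψ z * (pdt U z + b * pdx U z)
      = Ψ z * pdt U z + a * (Ψ z * pdx U z) := by rw [mul_add, ← mul_assoc, ← hint, mul_assoc]
    _ = -((pdt Ψ z + a * pdx Ψ z) * U z) := by rw [ht, hx]; noncomm_ring
    _ = 0 := by rw [hevol, zero_mul, neg_zero]
end
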